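/- arXiv:1711.09204 — 2 statements merged into one kernel-verified Lean document; each statement's English description precedes it below -/
import Mathlib

section
/- The trace of the Jacobi endomorphism of the spray G^i = P y^i, with P = -(2L + ⟨c',y⟩)/(2h), equals (n-1) F², where F² = (4hQ - (2L + ⟨c',y⟩)²)/(2h)². Hence the metric F has constant flag curvature 1 (Ricci scalar ρ = F²). -/
open Finset

/-- Partial derivative of `f` with respect to the `i`-th coordinate at `x`. -/
noncomputable def pd {n : ℕ} (i : Fin n) (f : (Fin n → ℝ) → ℝ) (x : Fin n → ℝ) : ℝ :=
  deriv (fun t => f (Function.update x i t)) (x i)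

/-- Partial derivative with respect to the `i`-th `x`-coordinate. -/
noncomputable def pdx {n : ℕ} (i : Fin n) (f : (Fin n → ℝ) → (Fin n → ℝ) → ℝ)
    (x y : Fin n → ℝ) : ℝ :=
  deriv (fun t => f (Function.update x i t) y) (x i)

/-- Partial derivative with respect to the `i`-th `y`-coordinate. -/
noncomputable def pdy {n : ℕ} (i : Fin n) (f : (Fin n → ℝ) → (Fin n → ℝ) → ℝ)
    (x y : Fin n → ℝ) : ℝ :=
  deriv (fun t => f x (Function.update y i t)) (y i)

/-! Since `P = ⟨p(x), y⟩` is linear in `y`, the connection coefficients are explicit: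
`N^i_j = p_j y^i + P δ^i_j` and `G^i_{jk} = p_j δ^i_k + p_k δ^i_j`. The Jacobi endomorphism
then has the projective form `R^i_j = Ξ δ^i_j + τ_j y^i` with `Ξ = P² - y^k ∂_{x^k} P` and
`τ_j y^j = -Ξ`, so its trace is `(n - 1) Ξ`. Here `p = -∇h / (2h)`, which gives
`Ξ = (2h Hess h(y, y) - dh(y)²) / (2h)²`, and for the quadratic `h` we have `Hess h(y, y) = 2Q`
and `dh(y) = 2L + ⟨c', y⟩`. -/

theorem hasDerivAt_update_apply {n : ℕ} (x : Fin n → ℝ) (j i : Fin n) (t : ℝ) :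
    HasDerivAt (fun s => Function.update x j s i) (if i = j then 1 else 0) t := by
  simpa [Pi.single_apply] using hasDerivAt_pi.1 (hasDerivAt_update x j t) i

theorem hasDerivAt_sum_mul_update {n : ℕ} (a x : Fin n → ℝ) (j : Fin n) (t : ℝ) :
    HasDerivAt (fun s => ∑ k, a k * Function.update x j s k) (a j) t := by
  simpa using HasDerivAt.fun_sum fun k (_ : k ∈ univ) =>
    (hasDerivAt_update_apply x j k t).const_mul (a k)

theorem sum_neg_div_mul {n : ℕ} (a y : Fin n → ℝ) (d : ℝ) :
    ∑ k, -a k / d * y k = -(∑ k, a k * y k) / d := by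
  rw [neg_div, sum_div, ← sum_neg_distrib]
  exact sum_congr rfl fun _ _ => by ring

theorem sq_sum_neg_div_sub_sum {n : ℕ} {h : ℝ} (hh : h ≠ 0) (a y : Fin n → ℝ)
    (H : Fin n → Fin n → ℝ) :
    (∑ k, -a k / (2 * h) * y k) ^ 2
        - ∑ k, y k * ∑ s, (-H k s * (2 * h) - -a s * (2 * a k)) / (2 * h) ^ 2 * y s
      = (2 * h * ∑ k, ∑ s, H k s * y k * y s - (∑ k, a k * y k) ^ 2) / (2 * h) ^ 2 := by
  have hD : ∑ k, y k * ∑ s, (-H k s * (2 * h) - -a s * (2 * a k)) / (2 * h) ^ 2 * y s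
      = (-(2 * h) * ∑ k, ∑ s, H k s * y k * y s + 2 * (∑ k, a k * y k) ^ 2) / (2 * h) ^ 2 := by
    rw [sq (∑ k, a k * y k), sum_mul_sum]
    simp only [mul_sum, ← sum_add_distrib, sum_div]
    exact sum_congr rfl fun _ _ => sum_congr rfl fun _ _ => by ring
  rw [sum_neg_div_mul, hD]
  field_simp
  ring

section LinearProjectiveSpray

variable {n : ℕ} {p : Fin n → (Fin n → ℝ) → ℝ} {G : Fin n → (Fin n → ℝ) → (Fin n → ℝ) → ℝ}
  {N : Fin n → Fin n → (Fin n → ℝ) → (Fin n → ℝ) → ℝ}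
  {Gc : Fin n → Fin n → Fin n → (Fin n → ℝ) → (Fin n → ℝ) → ℝ}
  {R : Fin n → Fin n → (Fin n → ℝ) → (Fin n → ℝ) → ℝ}
  {x : Fin n → ℝ} {dp : Fin n → Fin n → ℝ}

theorem pdy_linearProjectiveSpray (hG : ∀ i x y, G i x y = (∑ k, p k x * y k) * y i)
    (i j : Fin n) (x y : Fin n → ℝ) :
    pdy j (G i) x y = p j x * y i + (∑ k, p k x * y k) * if i = j then 1 else 0 := by
  have hd := (hasDerivAt_sum_mul_update (fun k => p k x) y j (y j)).fun_mul
    (hasDerivAt_update_apply y j i (y j))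
  simp only [pdy, hG, hd.deriv, Function.update_eq_self]

theorem pdy_linearProjectiveSpray_connection
    (hN : ∀ i j x y, N i j x y = p j x * y i + (∑ k, p k x * y k) * if i = j then 1 else 0)
    (i j k : Fin n) (x y : Fin n → ℝ) :
    pdy k (N i j) x y = p j x * (if i = k then 1 else 0) + p k x * if i = j then 1 else 0 := by
  have hd := ((hasDerivAt_update_apply y k i (y k)).const_mul (p j x)).fun_add
    ((hasDerivAt_sum_mul_update (fun k => p k x) y k (y k)).mul_const (if i = j then 1 else 0))
  simp only [pdy, hN, hd.deriv]

theorem pdx_linearProjectiveSpray (hG : ∀ i x y, G i x y = (∑ k, p k x * y k) * y i)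
    (hp : ∀ k s, HasDerivAt (fun t => p s (Function.update x k t)) (dp k s) (x k))
    (i k : Fin n) (y : Fin n → ℝ) :
    pdx k (G i) x y = (∑ s, dp k s * y s) * y i := by
  have hd := (HasDerivAt.fun_sum fun s (_ : s ∈ univ) => (hp k s).mul_const (y s)).mul_const (y i)
  simp only [pdx, hG, hd.deriv]

theorem pdx_linearProjectiveSpray_connection
    (hN : ∀ i j x y, N i j x y = p j x * y i + (∑ k, p k x * y k) * if i = j then 1 else 0)
    (hp : ∀ k s, HasDerivAt (fun t => p s (Function.update x k t)) (dp k s) (x k))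
    (i j k : Fin n) (y : Fin n → ℝ) :
    pdx k (N i j) x y = dp k j * y i + (∑ s, dp k s * y s) * if i = j then 1 else 0 := by
  have hd := ((hp k j).mul_const (y i)).fun_add
    ((HasDerivAt.fun_sum fun s (_ : s ∈ univ) => (hp k s).mul_const (y s)).mul_const
      (if i = j then 1 else 0))
  simp only [pdx, hN, hd.deriv]

theorem jacobi_linearProjectiveSpray (hG : ∀ i x y, G i x y = (∑ k, p k x * y k) * y i)
    (hN : ∀ i j x y, N i j x y = pdy j (G i) x y)
    (hGc : ∀ i j k x y, Gc i j k x y = pdy k (N i j) x y)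
    (hR : ∀ i j x y, R i j x y =
      2 * pdx j (G i) x y - (∑ k, y k * pdx k (N i j) x y)
        + 2 * (∑ k, G k x y * Gc i j k x y) - (∑ k, N i k x y * N k j x y))
    (hp : ∀ k s, HasDerivAt (fun t => p s (Function.update x k t)) (dp k s) (x k))
    (i j : Fin n) (y : Fin n → ℝ) :
    R i j x y =
      ((∑ k, p k x * y k) ^ 2 - ∑ k, y k * ∑ s, dp k s * y s) * (if i = j then 1 else 0)
        + (2 * (∑ s, dp j s * y s) - (∑ k, y k * dp k j) - (∑ k, p k x * y k) * p j x) * y i := by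
  have hN' : ∀ i j x y, N i j x y = p j x * y i + (∑ k, p k x * y k) * if i = j then 1 else 0 :=
    fun i j x y => (hN i j x y).trans (pdy_linearProjectiveSpray hG i j x y)
  rw [hR, pdx_linearProjectiveSpray hG hp]
  simp only [pdx_linearProjectiveSpray_connection hN' hp, hGc,
    pdy_linearProjectiveSpray_connection hN', hN', hG, mul_add, add_mul, sum_add_distrib, mul_ite,
    ite_mul, mul_one, mul_zero, zero_mul, sum_ite_eq, sum_ite_eq', mem_univ, if_true]
  set P := ∑ k, p k x * y k
  have e1 : ∑ k, y k * (dp k j * y i) = (∑ k, y k * dp k j) * y i := by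
    rw [sum_mul]; exact sum_congr rfl fun _ _ => by ring
  have e2 : ∑ k, p k x * y i * (p j x * y k) = P * p j x * y i := by
    rw [mul_assoc, sum_mul]; exact sum_congr rfl fun _ _ => by ring
  have e3 : ∑ k, P * y k * p k x = P ^ 2 := by
    rw [sq, mul_sum]; exact sum_congr rfl fun _ _ => by ring
  simp only [e1, e2, sum_ite_irrel, sum_const_zero, e3]
  split_ifs <;> ring

theorem trace_jacobi_linearProjectiveSpray (hG : ∀ i x y, G i x y = (∑ k, p k x * y k) * y i)
    (hN : ∀ i j x y, N i j x y = pdy j (G i) x y)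
    (hGc : ∀ i j k x y, Gc i j k x y = pdy k (N i j) x y)
    (hR : ∀ i j x y, R i j x y =
      2 * pdx j (G i) x y - (∑ k, y k * pdx k (N i j) x y)
        + 2 * (∑ k, G k x y * Gc i j k x y) - (∑ k, N i k x y * N k j x y))
    (hp : ∀ k s, HasDerivAt (fun t => p s (Function.update x k t)) (dp k s) (x k))
    (y : Fin n → ℝ) :
    ∑ i, R i i x y =
      ((n : ℝ) - 1) * ((∑ k, p k x * y k) ^ 2 - ∑ k, y k * ∑ s, dp k s * y s) := by
  simp only [jacobi_linearProjectiveSpray hG hN hGc hR hp, if_true, mul_one, sum_add_distrib,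
    sum_const, card_univ, Fintype.card_fin, nsmul_eq_mul]
  set P := ∑ k, p k x * y k
  set D := ∑ k, y k * ∑ s, dp k s * y s
  have hD : ∑ i, (∑ k, y k * dp k i) * y i = D := by
    simp only [D, sum_mul, mul_sum]
    rw [sum_comm]
    exact sum_congr rfl fun _ _ => sum_congr rfl fun _ _ => by ring
  have h2D : ∑ i, (2 * ∑ s, dp i s * y s) * y i = 2 * D := by
    rw [mul_sum]; exact sum_congr rfl fun _ _ => by ring
  have hP : ∑ i, P * p i x * y i = P ^ 2 := by
    rw [sq, mul_sum]; exact sum_congr rfl fun _ _ => by ring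
  simp only [sub_mul, sum_sub_distrib, hD, h2D, hP]
  ring

theorem trace_jacobi_of_neg_grad_div
    {h : (Fin n → ℝ) → ℝ} {a : Fin n → (Fin n → ℝ) → ℝ} {H : Fin n → Fin n → ℝ}
    (hG : ∀ i x y, G i x y = (∑ k, -a k x / (2 * h x) * y k) * y i)
    (hN : ∀ i j x y, N i j x y = pdy j (G i) x y)
    (hGc : ∀ i j k x y, Gc i j k x y = pdy k (N i j) x y)
    (hR : ∀ i j x y, R i j x y =
      2 * pdx j (G i) x y - (∑ k, y k * pdx k (N i j) x y)
        + 2 * (∑ k, G k x y * Gc i j k x y) - (∑ k, N i k x y * N k j x y))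
    (hh : ∀ k, HasDerivAt (fun t => h (Function.update x k t)) (a k x) (x k))
    (ha : ∀ k s, HasDerivAt (fun t => a s (Function.update x k t)) (H k s) (x k))
    (hx : h x ≠ 0) (y : Fin n → ℝ) :
    ∑ i, R i i x y = ((n : ℝ) - 1) *
      ((2 * h x * ∑ k, ∑ s, H k s * y k * y s - (∑ k, a k x * y k) ^ 2) / (2 * h x) ^ 2) := by
  have hp : ∀ k s,
      HasDerivAt (fun t => -a s (Function.update x k t) / (2 * h (Function.update x k t)))
        ((-H k s * (2 * h x) - -a s x * (2 * a k x)) / (2 * h x) ^ 2) (x k) := fun k s => by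
    simpa only [Function.update_eq_self] using
      (ha k s).fun_neg.fun_div ((hh k).const_mul 2) (by simpa using hx)
  rw [trace_jacobi_linearProjectiveSpray hG hN hGc hR hp, sq_sum_neg_div_sub_sum hx]

end LinearProjectiveSpray

theorem hasDerivAt_quadratic_update {n : ℕ} {C : Fin n → Fin n → ℝ} (hsym : ∀ i j, C i j = C j i)
    (c' : Fin n → ℝ) (c : ℝ) (x : Fin n → ℝ) (j : Fin n) :
    HasDerivAt (fun t => (∑ r, ∑ s, C r s * Function.update x j t r * Function.update x j t s)
        + (∑ k, c' k * Function.update x j t k) + c)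
      (2 * (∑ r, C r j * x r) + c' j) (x j) := by
  have hq := HasDerivAt.fun_sum fun r (_ : r ∈ univ) => HasDerivAt.fun_sum fun s (_ : s ∈ univ) =>
    ((hasDerivAt_update_apply x j r (x j)).const_mul (C r s)).fun_mul
      (hasDerivAt_update_apply x j s (x j))
  refine ((hq.fun_add (hasDerivAt_sum_mul_update c' x j (x j))).add_const c).congr_deriv ?_
  simp only [Function.update_eq_self, mul_ite, ite_mul, mul_one, mul_zero, zero_mul,
    sum_add_distrib, sum_ite_eq', mem_univ, if_true, sum_ite_irrel, sum_const_zero, hsym j]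
  ring

theorem stmt7_general (n : ℕ) (C : Fin n → Fin n → ℝ) (c' : Fin n → ℝ) (c : ℝ)
    (hsym : ∀ i j, C i j = C j i)
    (h : (Fin n → ℝ) → ℝ)
    (hh : ∀ x, h x = (∑ i, ∑ j, C i j * x i * x j) + (∑ k, c' k * x k) + c)
    (P : (Fin n → ℝ) → (Fin n → ℝ) → ℝ)
    (hP : ∀ x y, P x y =
      -(2 * (∑ i, ∑ j, C i j * x i * y j) + ∑ k, c' k * y k) / (2 * h x))
    (G : Fin n → (Fin n → ℝ) → (Fin n → ℝ) → ℝ)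
    (hG : ∀ i x y, G i x y = P x y * y i)
    (N : Fin n → Fin n → (Fin n → ℝ) → (Fin n → ℝ) → ℝ)
    (hN : ∀ i j x y, N i j x y = pdy j (G i) x y)
    (Gc : Fin n → Fin n → Fin n → (Fin n → ℝ) → (Fin n → ℝ) → ℝ)
    (hGc : ∀ i j k x y, Gc i j k x y = pdy k (N i j) x y)
    (R : Fin n → Fin n → (Fin n → ℝ) → (Fin n → ℝ) → ℝ)
    (hR : ∀ i j x y, R i j x y =
      2 * pdx j (G i) x y - (∑ k, y k * pdx k (N i j) x y)
        + 2 * (∑ k, G k x y * Gc i j k x y) - (∑ k, N i k x y * N k j x y)) :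
    ∀ x y : Fin n → ℝ, h x > 0 →
      (∑ i, R i i x y) =
        ((n : ℝ) - 1) *
          ((4 * h x * (∑ r, ∑ s, C r s * y r * y s)
              - (2 * (∑ r, ∑ s, C r s * x r * y s) + ∑ k, c' k * y k) ^ 2)
            / (2 * h x) ^ 2) := by
  intro x y hx
  set a : Fin n → (Fin n → ℝ) → ℝ := fun k x => 2 * (∑ r, C r k * x r) + c' k
  have ha_mul : ∀ x y : Fin n → ℝ,
      ∑ k, a k x * y k = 2 * (∑ r, ∑ s, C r s * x r * y s) + ∑ k, c' k * y k := by
    intro x y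
    simp only [a, add_mul, sum_add_distrib, mul_assoc, ← mul_sum, sum_mul]
    rw [sum_comm]
  have hG' : ∀ i (x y : Fin n → ℝ), G i x y = (∑ k, -a k x / (2 * h x) * y k) * y i := by
    intro i x y
    rw [hG, hP, sum_neg_div_mul, ha_mul]
  have hgrad : ∀ k, HasDerivAt (fun t => h (Function.update x k t)) (a k x) (x k) := by
    intro k
    simpa only [hh] using hasDerivAt_quadratic_update hsym c' c x k
  have hhess : ∀ k s, HasDerivAt (fun t => a s (Function.update x k t)) (2 * C k s) (x k) :=
    fun k s =>
      ((hasDerivAt_sum_mul_update (fun r => C r s) x k (x k)).const_mul 2).add_const (c' s)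
  have hQ : ∑ k, ∑ s, 2 * C k s * y k * y s = 2 * ∑ r, ∑ s, C r s * y r * y s := by
    simp only [mul_sum, mul_assoc]
  rw [trace_jacobi_of_neg_grad_div hG' hN hGc hR hgrad hhess hx.ne', ha_mul, hQ]
  ring

/-- The trace of the Jacobi endomorphism equals `(n-1) F²`; hence the metric has
constant flag curvature `1`. -/
theorem stmt7 (n : ℕ) (hn : 1 ≤ n) (C : Fin n → Fin n → ℝ) (c' : Fin n → ℝ) (c : ℝ)
    (hsym : ∀ i j, C i j = C j i)
    (h : (Fin n → ℝ) → ℝ)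
    (hh : ∀ x, h x = (∑ i, ∑ j, C i j * x i * x j) + (∑ k, c' k * x k) + c)
    (P : (Fin n → ℝ) → (Fin n → ℝ) → ℝ)
    (hP : ∀ x y, P x y =
      -(2 * (∑ i, ∑ j, C i j * x i * y j) + ∑ k, c' k * y k) / (2 * h x))
    (G : Fin n → (Fin n → ℝ) → (Fin n → ℝ) → ℝ)
    (hG : ∀ i x y, G i x y = P x y * y i)
    (N : Fin n → Fin n → (Fin n → ℝ) → (Fin n → ℝ) → ℝ)
    (hN : ∀ i j x y, N i j x y = pdy j (G i) x y)
    (Gc : Fin n → Fin n → Fin n → (Fin n → ℝ) → (Fin n → ℝ) → ℝ)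
    (hGc : ∀ i j k x y, Gc i j k x y = pdy k (N i j) x y)
    (R : Fin n → Fin n → (Fin n → ℝ) → (Fin n → ℝ) → ℝ)
    (hR : ∀ i j x y, R i j x y =
      2 * pdx j (G i) x y - (∑ k, y k * pdx k (N i j) x y)
        + 2 * (∑ k, G k x y * Gc i j k x y) - (∑ k, N i k x y * N k j x y)) :
    ∀ x y : Fin n → ℝ, h x > 0 →
      (∑ i, R i i x y) =
        ((n : ℝ) - 1) *
          ((4 * h x * (∑ r, ∑ s, C r s * y r * y s)
              - (2 * (∑ r, ∑ s, C r s * x r * y s) + ∑ k, c' k * y k) ^ 2)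
            / (2 * h x) ^ 2) :=
  stmt7_general n C c' c hsym h hh P hP G hG N hN Gc hGc R hR
end

section
/- The Klein-type metric F₁(x,y) = sqrt(((1+|x|²)|y|² - ⟨x,y⟩²))/(1+|x|²) on ℝⁿ satisfies Hamel's projective-flatness equations y^j ∂²F₁/(∂y^k ∂x^j) = ∂F₁/∂x^k for all k, at all (x,y) with y ≠ 0 and y not parallel to x in the degenerate sense (radicand positive). -/
/-!
Write `A = 1 + |x|²`, `B = |y|²`, `C = ⟨x, y⟩` and `Q = AB - C²`, so that `F₁ = √Q / A`.
Differentiating along the coordinate line `t ↦ x + (t - xʲ) eʲ` gives the closed form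
`∇ₓF₁ = ((2C² - AB) x - AC y) / (A² √Q)`. Differentiating this vector in `yᵏ` produces
multiples of `x`, `y` and `eᵏ`, which pair with `y` to `C`, `B` and `yᵏ`; with `√Q² = Q`
the result `y · ∂_{yᵏ} ∇ₓF₁` collapses to the `k`-th component of `∇ₓF₁` again.
-/

open Finset

open Topology

section KleinMetric

variable {ι : Type*} [Fintype ι]

theorem HasDerivAt.dotProduct {u v : ℝ → ι → ℝ} {u' v' : ι → ℝ} {t : ℝ}
    (hu : HasDerivAt u u' t) (hv : HasDerivAt v v' t) :
    HasDerivAt (fun s => u s ⬝ᵥ v s) (u' ⬝ᵥ v t + u t ⬝ᵥ v') t := by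
  have h := HasDerivAt.fun_sum (u := Finset.univ) fun i _ =>
    (hasDerivAt_pi.1 hu i).mul (hasDerivAt_pi.1 hv i)
  rw [Finset.sum_add_distrib] at h
  exact h

theorem one_add_dotProduct_self_pos (x : ι → ℝ) : 0 < 1 + x ⬝ᵥ x :=
  add_pos_of_pos_of_nonneg one_pos (Finset.sum_nonneg fun i _ => mul_self_nonneg (x i))

def kleinRadicand (x y : ι → ℝ) : ℝ := (1 + x ⬝ᵥ x) * (y ⬝ᵥ y) - (x ⬝ᵥ y) ^ 2

noncomputable def kleinMetric (x y : ι → ℝ) : ℝ := √(kleinRadicand x y) / (1 + x ⬝ᵥ x)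

noncomputable def kleinGradX (x y : ι → ℝ) : ι → ℝ :=
  ((1 + x ⬝ᵥ x) ^ 2 * √(kleinRadicand x y))⁻¹ •
    ((2 * (x ⬝ᵥ y) ^ 2 - (1 + x ⬝ᵥ x) * (y ⬝ᵥ y)) • x - ((1 + x ⬝ᵥ x) * (x ⬝ᵥ y)) • y)

theorem HasDerivAt.kleinRadicand {u v : ℝ → ι → ℝ} {u' v' : ι → ℝ} {t : ℝ}
    (hu : HasDerivAt u u' t) (hv : HasDerivAt v v' t) :
    HasDerivAt (fun s => kleinRadicand (u s) (v s))
      ((u' ⬝ᵥ u t + u t ⬝ᵥ u') * (v t ⬝ᵥ v t) + (1 + u t ⬝ᵥ u t) * (v' ⬝ᵥ v t + v t ⬝ᵥ v')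
        - 2 * (u t ⬝ᵥ v t) * (u' ⬝ᵥ v t + u t ⬝ᵥ v')) t := by
  refine ((((hu.dotProduct hu).const_add 1).mul (hv.dotProduct hv)).sub
    ((hu.dotProduct hv).pow 2)).congr_deriv ?_
  norm_num

variable [DecidableEq ι]

theorem hasDerivAt_kleinMetric_update_left (j : ι) (x y : ι → ℝ)
    (hQ : 0 < kleinRadicand x y) :
    HasDerivAt (fun t => kleinMetric (Function.update x j t) y) (kleinGradX x y j) (x j) := by
  have hx := hasDerivAt_update x j (x j)
  have hA := (hx.dotProduct hx).const_add 1
  have hS := (hx.kleinRadicand (hasDerivAt_const (x j) y)).sqrt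
  have hA0 := one_add_dotProduct_self_pos x
  simp only [Function.update_eq_self] at hA hS
  refine ((hS hQ.ne').div hA (by rw [Function.update_eq_self]; exact hA0.ne')).congr_deriv ?_
  have hS2 : √(kleinRadicand x y) ^ 2 = (1 + x ⬝ᵥ x) * (y ⬝ᵥ y) - (x ⬝ᵥ y) ^ 2 :=
    Real.sq_sqrt hQ.le
  have hS0 := Real.sqrt_pos.2 hQ
  simp only [kleinGradX, Function.update_eq_self, Pi.smul_apply, Pi.sub_apply, smul_eq_mul,
    single_dotProduct, dotProduct_single, dotProduct_zero, zero_dotProduct]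
  field_simp
  linear_combination (-4 * x j) * hS2

theorem kleinGradX_hamel (k : ι) (x y : ι → ℝ) (hQ : 0 < kleinRadicand x y) :
    ∃ g, HasDerivAt (fun t => kleinGradX x (Function.update y k t)) g (y k) ∧
      y ⬝ᵥ g = kleinGradX x y k := by
  have hv := hasDerivAt_update y k (y k)
  have hx := hasDerivAt_const (y k) x
  have hS := ((hx.kleinRadicand hv).sqrt (by rw [Function.update_eq_self]; exact hQ.ne')).const_mul
    ((1 + x ⬝ᵥ x) ^ 2)
  have hB := hv.dotProduct hv
  have hC := hx.dotProduct hv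
  have hA0 := one_add_dotProduct_self_pos x
  have hS0 := Real.sqrt_pos.2 hQ
  have hc := hS.inv (by rw [Function.update_eq_self]; positivity)
  have hw := ((((hC.pow 2).const_mul 2).sub (hB.const_mul (1 + x ⬝ᵥ x))).smul_const x).sub
    ((hC.const_mul (1 + x ⬝ᵥ x)).smul hv)
  refine ⟨_, hc.smul hw, ?_⟩
  have hS2 : √(kleinRadicand x y) ^ 2 = (1 + x ⬝ᵥ x) * (y ⬝ᵥ y) - (x ⬝ᵥ y) ^ 2 :=
    Real.sq_sqrt hQ.le
  simp only [kleinGradX, Function.update_eq_self, Pi.smul_apply, Pi.sub_apply, smul_eq_mul,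
    dotProduct_add, dotProduct_sub, dotProduct_smul, single_dotProduct, dotProduct_single,
    dotProduct_zero, zero_dotProduct, dotProduct_comm y x, Pi.inv_apply, Nat.cast_ofNat]
  field_simp
  linear_combination 4 * (x ⬝ᵥ y) * ((x ⬝ᵥ y) * x k - (1 + x ⬝ᵥ x) * y k) * hS2

end KleinMetric

section Partials

variable {n : ℕ}

theorem pdx_kleinMetric (j : Fin n) (x y : Fin n → ℝ) (hQ : 0 < kleinRadicand x y) :
    pdx j kleinMetric x y = kleinGradX x y j :=
  (hasDerivAt_kleinMetric_update_left j x y hQ).deriv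

theorem pdy_pdx_kleinMetric {j k : Fin n} {x y g : Fin n → ℝ}
    (hg : HasDerivAt (fun t => kleinGradX x (Function.update y k t)) g (y k))
    (hQ : 0 < kleinRadicand x y) :
    pdy k (fun x' y' => pdx j kleinMetric x' y') x y = g j := by
  have hpos : ∀ᶠ t in 𝓝 (y k), 0 < kleinRadicand x (Function.update y k t) := by
    have h := ((hasDerivAt_const (y k) x).kleinRadicand (hasDerivAt_update y k (y k))).continuousAt
    rw [ContinuousAt, Function.update_eq_self] at h
    exact h.eventually_const_lt hQ
  refine ((hasDerivAt_pi.1 hg j).congr_of_eventuallyEq ?_).deriv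
  filter_upwards [hpos] with t ht using pdx_kleinMetric j x _ ht

end Partials

theorem stmt9_general (n : ℕ)
    (F₁ : (Fin n → ℝ) → (Fin n → ℝ) → ℝ)
    (hF₁ : ∀ x y, F₁ x y =
      Real.sqrt ((1 + ∑ i, (x i) ^ 2) * (∑ i, (y i) ^ 2) - (∑ i, x i * y i) ^ 2)
        / (1 + ∑ i, (x i) ^ 2)) :
    ∀ x y : Fin n → ℝ, y ≠ 0 →
      0 < (1 + ∑ i, (x i) ^ 2) * (∑ i, (y i) ^ 2) - (∑ i, x i * y i) ^ 2 →
      ∀ k, (∑ j, y j * pdy k (fun x' y' => pdx j F₁ x' y') x y) = pdx k F₁ x y := by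
  have hF : F₁ = kleinMetric := by
    funext x y
    simp only [hF₁, kleinMetric, kleinRadicand, dotProduct, sq]
  subst hF
  intro x y _ hQ k
  replace hQ : 0 < kleinRadicand x y := by simpa only [kleinRadicand, dotProduct, sq] using hQ
  obtain ⟨g, hg, hHamel⟩ := kleinGradX_hamel k x y hQ
  simp only [pdy_pdx_kleinMetric hg hQ, pdx_kleinMetric k x y hQ]
  exact hHamel

/-- The Klein-type metric `F₁` satisfies Hamel's projective-flatness equations. -/
theorem stmt9 (n : ℕ) (hn : 1 ≤ n)
    (F₁ : (Fin n → ℝ) → (Fin n → ℝ) → ℝ)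
    (hF₁ : ∀ x y, F₁ x y =
      Real.sqrt ((1 + ∑ i, (x i) ^ 2) * (∑ i, (y i) ^ 2) - (∑ i, x i * y i) ^ 2)
        / (1 + ∑ i, (x i) ^ 2)) :
    ∀ x y : Fin n → ℝ, y ≠ 0 →
      0 < (1 + ∑ i, (x i) ^ 2) * (∑ i, (y i) ^ 2) - (∑ i, x i * y i) ^ 2 →
      ∀ k, (∑ j, y j * pdy k (fun x' y' => pdx j F₁ x' y') x y) = pdx k F₁ x y :=
  stmt9_general n F₁ hF₁
end
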